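/- Let m be a positive natural number and β a real number. Let A : ℝ → Matrix (Fin m) (Fin m) ℝ be such that A(ω) is invertible for every ω, let B be an m×m real matrix, and assume A(0) + β·B is invertible. Define G(ω, ω′) := β·( (if ω′ = −ω then A(ω)⁻¹ else 0) − (if ω = 0 ∧ ω′ = 0 then β·((A(0) + β·B)⁻¹ · B · A(0)⁻¹) else 0) ). Then for all ω, ω′: A(ω)·G(ω, ω′) + (if ω = 0 then β·(B·G(0, ω′)) else 0) = (if ω′ = −ω then β·𝟙 else 0), where 𝟙 is the m×m identity matrix. -/
import Mathlib


open Matrix Classical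

/-- The boxed solution of the multi-local two-point-function equation:
with a local invertible part `A(ω)` and a bi-local part `β·B` supported at zero
frequency, the propagator
`G(ω, ω′) = β·( A(ω)⁻¹·δ_{ω,−ω′} − (A(0) + β·B)⁻¹·B·β·A(0)⁻¹·δ_{ω,0}·δ_{ω′,0} )`
satisfies `A(ω)·G(ω, ω′) + β·B·G(0, ω′)·δ_{ω,0} = β·𝟙·δ_{ω,−ω′}`. -/
theorem multilocal_propagator_solution (m : ℕ) (hm : 0 < m) (β : ℝ)
    (A : ℝ → Matrix (Fin m) (Fin m) ℝ) (B : Matrix (Fin m) (Fin m) ℝ)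
    (hA : ∀ ω : ℝ, IsUnit (A ω))
    (hAB : IsUnit (A 0 + β • B))
    (G : ℝ → ℝ → Matrix (Fin m) (Fin m) ℝ)
    (hG : ∀ ω ω' : ℝ,
      G ω ω' = β • ((if ω' = -ω then (A ω)⁻¹ else 0) -
        (if ω = 0 ∧ ω' = 0 then β • ((A 0 + β • B)⁻¹ * B * (A 0)⁻¹) else 0))) :
    ∀ ω ω' : ℝ,
      A ω * G ω ω' + (if ω = 0 then β • (B * G 0 ω') else 0) =
        (if ω' = -ω then β • (1 : Matrix (Fin m) (Fin m) ℝ) else 0) := by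
  intro ω ω'
  have hA0 : A 0 * (A 0)⁻¹ = 1 := mul_nonsing_inv _ ((Matrix.isUnit_iff_isUnit_det _).mp (hA 0))
  have hAB' : (A 0 + β • B) * (A 0 + β • B)⁻¹ = 1 :=
    mul_nonsing_inv _ ((Matrix.isUnit_iff_isUnit_det _).mp hAB)
  by_cases h0 : ω = 0
  · subst h0
    by_cases h0' : ω' = 0
    · subst h0'
      simp only [hG, neg_zero, if_pos rfl, if_pos (And.intro rfl rfl)]
      have key : (A 0 + β • B) * ((A 0)⁻¹ - β • ((A 0 + β • B)⁻¹ * B * (A 0)⁻¹)) = 1 := by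
        have h1 : (A 0 + β • B) * (β • ((A 0 + β • B)⁻¹ * B * (A 0)⁻¹))
            = β • (B * (A 0)⁻¹) := by
          rw [Matrix.mul_smul, ← mul_assoc, ← mul_assoc, hAB', one_mul]
        rw [mul_sub, h1, add_mul, smul_mul_assoc, hA0]
        abel
      calc A 0 * (β • ((A 0)⁻¹ - β • ((A 0 + β • B)⁻¹ * B * (A 0)⁻¹)))
            + β • (B * (β • ((A 0)⁻¹ - β • ((A 0 + β • B)⁻¹ * B * (A 0)⁻¹))))
          = β • ((A 0 + β • B) * ((A 0)⁻¹ - β • ((A 0 + β • B)⁻¹ * B * (A 0)⁻¹))) := by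
            rw [add_mul, smul_mul_assoc, Matrix.mul_smul, Matrix.mul_smul, smul_add,
              smul_smul]
        _ = β • (1 : Matrix (Fin m) (Fin m) ℝ) := by rw [key]
    · have hne : ¬ ω' = -(0:ℝ) := by simpa [neg_zero] using h0'
      simp [hG, hne, h0']
  · have hB : G 0 ω' = G 0 ω' := rfl
    by_cases h' : ω' = -ω
    · simp [hG, h', h0, Matrix.mul_smul,
        mul_nonsing_inv _ ((Matrix.isUnit_iff_isUnit_det _).mp (hA ω))]
    · simp [hG, h', h0]
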